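/- Let V be a finite-dimensional vector space over ℚ, B : V → V → ℚ a nondegenerate bilinear form, and δ₁, …, δ_s ∈ V vectors satisfying B(δ_i, δ_j) = 0 for all i, j. Define T' : V → V by T'(x) = x − Σ_{i=1}^{s} B(δ_i, x) · δ_i and set T = T'². Let Φ : V ⊗ V → End(V) be the linear isomorphism determined by Φ(v ⊗ w)(x) = B(v, x) · w. Then id − T = Φ(2 · Σ_{i=1}^{s} δ_i ⊗ δ_i); that is, the tensor in V ⊗ V corresponding under Φ to −log T = id − T is 2 Σ_i δ_i ⊗ δ_i. -/
import Mathlib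


/-- For the monodromy `T = T'²` of a quadratic degeneration, with
`T'(x) = x - ∑ᵢ B(δᵢ, x) • δᵢ` and `B(δᵢ, δⱼ) = 0`, the tensor corresponding under
the duality `Φ` to `-log T = id - T` is `2 ∑ᵢ δᵢ ⊗ δᵢ`. -/
theorem monodromy_class_is_sum_of_vanishing_cycles
    {V : Type*} [AddCommGroup V] [Module ℚ V] [FiniteDimensional ℚ V]
    (B : V →ₗ[ℚ] V →ₗ[ℚ] ℚ)
    (hB : LinearMap.BilinForm.Nondegenerate B)
    (s : ℕ) (δ : Fin s → V)
    (hδ : ∀ i j, B (δ i) (δ j) = 0)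
    (T' : Module.End ℚ V)
    (hT' : ∀ x, T' x = x - ∑ i, B (δ i) x • δ i)
    (Φ : TensorProduct ℚ V V →ₗ[ℚ] Module.End ℚ V)
    (hΦ : ∀ v w x, Φ (v ⊗ₜ[ℚ] w) x = B v x • w)
    (hΦbij : Function.Bijective Φ) :
    1 - T' * T' = Φ ((2 : ℚ) • ∑ i, δ i ⊗ₜ[ℚ] δ i) := by
  ext x
  have hBT : ∀ i, B (δ i) (T' x) = B (δ i) x := by
    intro i
    rw [hT', map_sub, map_sum]
    simp [hδ]
  have hRHS : Φ ((2 : ℚ) • ∑ i, δ i ⊗ₜ[ℚ] δ i) x = (2 : ℚ) • ∑ i, B (δ i) x • δ i := by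
    rw [map_smul, map_sum]
    simp only [LinearMap.smul_apply, LinearMap.coe_sum, Finset.sum_apply, hΦ]
  simp only [LinearMap.sub_apply, Module.End.one_apply, Module.End.mul_apply, hRHS]
  rw [hT' (T' x)]
  simp only [hBT]
  rw [hT' x]
  rw [two_smul]
  abel
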